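/- Let k be the Dirichlet Green's function k(t,s) = t(1−s) for t ≤ s and k(t,s) = s(1−t) for s ≤ t, let 0 < ρ < (1/4)·ln(4π/(π−2)), set t_ρ := (2/(3π))·arccos(e^{4ρ}·(π−2)/(3π) − 1/3) and F_low(t) := e^{−2ρ} ∫₀^{2/3} k(t,s) sin((3π/2)s) ds + e^{2ρ} ∫_{2/3}^{1} k(t,s) sin((3π/2)s) ds. If λ_ρ ∈ ℝ and a continuous u_ρ : [0,1] → ℝ with ‖u_ρ‖_∞ = ρ satisfy u_ρ(t) = λ_ρ ∫₀¹ k(t,s) · sin((3π/2)s) · e^{u_ρ(s)} / (∫₀¹ e^{u_ρ(x)} dx) ds for all t ∈ [0,1], then −ρ/F_low(t_ρ) ≤ λ_ρ ≤ ρ/F_low(t_ρ). -/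

import Mathlib

/-!
For `t ∈ [0, 1]` the Green's function `k(t, ·)` is nonnegative, while `sin (3π/2 · s)` is
nonnegative on `[0, 2/3]` and nonpositive on `[2/3, 1]`. Since `‖u‖ = ρ`, the weight
`e^{u(s)} / ∫ e^u` lies in `[e^{-2ρ}, e^{2ρ}]`, so the integral in the equation at `t` is
at least `F_low(t)`, whence `|λ| F_low(t) ≤ |u(t)| ≤ ρ`.

At `t_ρ = 2θ/(3π)`, `θ = arccos c`, `c = e^{4ρ}(π - 2)/(3π) - 1/3`, an explicit computation
gives `F_low(t_ρ) = 4 e^{-2ρ} / (9π²) · (sin θ - θ cos θ)`, which is positive because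
`0 < θ < π`; the bound on `ρ` is exactly `c < 1`.
-/

open MeasureTheory Set Real

noncomputable def dirichletGreen (t s : ℝ) : ℝ := if t ≤ s then t * (1 - s) else s * (1 - t)

lemma dirichletGreen_of_le {t s : ℝ} (h : t ≤ s) : dirichletGreen t s = t * (1 - s) :=
  if_pos h

lemma dirichletGreen_of_ge {t s : ℝ} (h : s ≤ t) : dirichletGreen t s = s * (1 - t) := by
  rcases h.eq_or_lt with rfl | h
  · exact dirichletGreen_of_le le_rfl
  · exact if_neg h.not_ge

lemma continuous_dirichletGreen (t : ℝ) : Continuous (dirichletGreen t) :=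
  Continuous.if_le (by fun_prop) (by fun_prop) continuous_const continuous_id
    fun s hs => by rw [← hs]

lemma dirichletGreen_nonneg {t s : ℝ} (ht₀ : 0 ≤ t) (ht₁ : t ≤ 1) (hs₀ : 0 ≤ s)
    (hs₁ : s ≤ 1) :
    0 ≤ dirichletGreen t s := by
  unfold dirichletGreen
  split_ifs <;> nlinarith

lemma integral_mul_sin_mul {ω : ℝ} (hω : ω ≠ 0) (a b : ℝ) :
    ∫ s in a..b, s * sin (ω * s) =
      (sin (ω * b) - ω * b * cos (ω * b)) / ω ^ 2 -
        (sin (ω * a) - ω * a * cos (ω * a)) / ω ^ 2 := by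
  have hcont : Continuous fun s => s * sin (ω * s) := by fun_prop
  refine intervalIntegral.integral_eq_sub_of_hasDerivAt
    (f := fun x => (sin (ω * x) - ω * x * cos (ω * x)) / ω ^ 2) (fun x _ => ?_)
    (hcont.intervalIntegrable _ _)
  have hl : HasDerivAt (fun y => ω * y) ω x := hasDerivAt_const_mul ω
  refine ((hl.sin.sub (hl.mul hl.cos)).div_const (ω ^ 2)).congr_deriv ?_
  field_simp
  ring

lemma integral_one_sub_mul_sin_mul {ω : ℝ} (hω : ω ≠ 0) (a b : ℝ) :
    ∫ s in a..b, (1 - s) * sin (ω * s) =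
      ((b - 1) * cos (ω * b) / ω - sin (ω * b) / ω ^ 2) -
        ((a - 1) * cos (ω * a) / ω - sin (ω * a) / ω ^ 2) := by
  have hcont : Continuous fun s => (1 - s) * sin (ω * s) := by fun_prop
  refine intervalIntegral.integral_eq_sub_of_hasDerivAt
    (f := fun x => (x - 1) * cos (ω * x) / ω - sin (ω * x) / ω ^ 2) (fun x _ => ?_)
    (hcont.intervalIntegrable _ _)
  have hl : HasDerivAt (fun y => ω * y) ω x := hasDerivAt_const_mul ω
  refine ((((hasDerivAt_id' x).sub_const 1).mul hl.cos).div_const ω |>.sub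
    (hl.sin.div_const (ω ^ 2))).congr_deriv ?_
  field_simp
  ring

lemma integral_dirichletGreen_mul_sin_zero_twoThirds {t : ℝ} (ht₀ : 0 ≤ t)
    (ht : t ≤ 2 / 3) :
    ∫ s in (0 : ℝ)..(2 / 3), dirichletGreen t s * sin (3 * π / 2 * s) =
      (4 * sin (3 * π / 2 * t) + 2 * π * t) / (9 * π ^ 2) := by
  have hcont : Continuous fun s => dirichletGreen t s * sin (3 * π / 2 * s) :=
    (continuous_dirichletGreen t).mul (by fun_prop)
  rw [← intervalIntegral.integral_add_adjacent_intervals (b := t) (hcont.intervalIntegrable _ _)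
    (hcont.intervalIntegrable _ _)]
  have hleft : ∫ s in (0 : ℝ)..t, dirichletGreen t s * sin (3 * π / 2 * s) =
      (1 - t) * ∫ s in (0 : ℝ)..t, s * sin (3 * π / 2 * s) := by
    rw [← intervalIntegral.integral_const_mul]
    refine intervalIntegral.integral_congr fun s hs => ?_
    rw [uIcc_of_le ht₀] at hs
    simp only [dirichletGreen_of_ge hs.2]
    ring
  have hright : ∫ s in t..(2 / 3), dirichletGreen t s * sin (3 * π / 2 * s) =
      t * ∫ s in t..(2 / 3), (1 - s) * sin (3 * π / 2 * s) := by
    rw [← intervalIntegral.integral_const_mul]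
    refine intervalIntegral.integral_congr fun s hs => ?_
    rw [uIcc_of_le ht] at hs
    simp only [dirichletGreen_of_le hs.1]
    ring
  have hω : 3 * π / 2 ≠ 0 := by positivity
  rw [hleft, hright, integral_mul_sin_mul hω, integral_one_sub_mul_sin_mul hω,
    show 3 * π / 2 * (2 / 3) = π by ring]
  simp only [mul_zero, sin_zero, cos_zero, sin_pi, cos_pi]
  field_simp
  ring

lemma integral_dirichletGreen_mul_sin_twoThirds_one {t : ℝ} (ht : t ≤ 2 / 3) :
    ∫ s in (2 / 3 : ℝ)..1, dirichletGreen t s * sin (3 * π / 2 * s) =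
      -(2 * (π - 2) * t) / (9 * π ^ 2) := by
  have hG : ∫ s in (2 / 3 : ℝ)..1, dirichletGreen t s * sin (3 * π / 2 * s) =
      t * ∫ s in (2 / 3 : ℝ)..1, (1 - s) * sin (3 * π / 2 * s) := by
    rw [← intervalIntegral.integral_const_mul]
    refine intervalIntegral.integral_congr fun s hs => ?_
    rw [uIcc_of_le (by norm_num)] at hs
    simp only [dirichletGreen_of_le (ht.trans hs.1)]
    ring
  have hω : 3 * π / 2 ≠ 0 := by positivity
  have hsin : sin (3 * π / 2 * 1) = -1 := by
    rw [show 3 * π / 2 * 1 = π / 2 + π by ring, sin_add_pi, sin_pi_div_two]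
  have hcos : cos (3 * π / 2 * 1) = 0 := by
    rw [show 3 * π / 2 * 1 = π / 2 + π by ring, cos_add_pi, cos_pi_div_two, neg_zero]
  rw [hG, integral_one_sub_mul_sin_mul hω, show 3 * π / 2 * (2 / 3) = π by ring, hsin, hcos,
    sin_pi, cos_pi]
  field_simp
  ring

noncomputable def fLow (ρ t : ℝ) : ℝ :=
  exp (-(2 * ρ)) * (∫ s in (0 : ℝ)..(2 / 3), dirichletGreen t s * sin (3 * π / 2 * s)) +
    exp (2 * ρ) * ∫ s in (2 / 3 : ℝ)..1, dirichletGreen t s * sin (3 * π / 2 * s)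

noncomputable def tRho (ρ : ℝ) : ℝ :=
  2 / (3 * π) * arccos (exp (4 * ρ) * (π - 2) / (3 * π) - 1 / 3)

lemma two_div_three_pi_mul_mem_Icc {θ : ℝ} (hθ₀ : 0 ≤ θ) (hθ : θ ≤ π) :
    2 / (3 * π) * θ ∈ Icc 0 (2 / 3) := by
  refine ⟨by positivity, ?_⟩
  rw [div_mul_eq_mul_div, div_le_div_iff₀ (by positivity) (by norm_num)]
  nlinarith [pi_pos]

lemma tRho_mem_Icc (ρ : ℝ) : tRho ρ ∈ Icc 0 1 :=
  Icc_subset_Icc_right (by norm_num)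
    (two_div_three_pi_mul_mem_Icc (arccos_nonneg _) (arccos_le_pi _))

lemma fLow_eq {ρ θ : ℝ} (hθ₀ : 0 ≤ θ) (hθ : θ ≤ π) :
    fLow ρ (2 / (3 * π) * θ) = 4 * exp (-(2 * ρ)) / (9 * π ^ 2) *
      (sin θ - θ * (exp (4 * ρ) * (π - 2) / (3 * π) - 1 / 3)) := by
  obtain ⟨ht₀, ht⟩ := two_div_three_pi_mul_mem_Icc hθ₀ hθ
  rw [fLow, integral_dirichletGreen_mul_sin_zero_twoThirds ht₀ ht,
    integral_dirichletGreen_mul_sin_twoThirds_one ht,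
    show 3 * π / 2 * (2 / (3 * π) * θ) = θ by field_simp,
    show exp (4 * ρ) = exp (2 * ρ) * exp (2 * ρ) by rw [← exp_add]; ring_nf, exp_neg]
  field_simp
  ring

lemma sin_sub_mul_cos_pos {θ : ℝ} (h₀ : 0 < θ) (hπ : θ < π) :
    0 < sin θ - θ * cos θ := by
  rcases le_or_gt (cos θ) 0 with hc | hc
  · nlinarith [sin_pos_of_pos_of_lt_pi h₀ hπ]
  · have hθ : θ < π / 2 := by
      by_contra! h
      linarith [cos_nonpos_of_pi_div_two_le_of_le h (by linarith)]
    have := lt_tan h₀ hθ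
    rw [tan_eq_sin_div_cos, lt_div_iff₀ hc] at this
    linarith

lemma tRho_arg_mem_Ioo {ρ : ℝ} (hρ : ρ < 1 / 4 * log (4 * π / (π - 2))) :
    exp (4 * ρ) * (π - 2) / (3 * π) - 1 / 3 ∈ Ioo (-1) 1 := by
  have hπ : 3 < π := pi_gt_three
  have hexp : exp (4 * ρ) < 4 * π / (π - 2) := by
    rw [← exp_log (div_pos (by positivity) (by linarith))]
    exact exp_lt_exp.mpr (by linarith)
  rw [lt_div_iff₀ (by linarith)] at hexp
  have hpos : 0 ≤ exp (4 * ρ) * (π - 2) / (3 * π) :=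
    div_nonneg (mul_nonneg (exp_pos _).le (by linarith)) (by positivity)
  refine ⟨by linarith, ?_⟩
  rw [sub_lt_iff_lt_add, div_lt_iff₀ (by positivity)]
  linarith

lemma fLow_tRho_pos {ρ : ℝ} (hρ : ρ < 1 / 4 * log (4 * π / (π - 2))) :
    0 < fLow ρ (tRho ρ) := by
  obtain ⟨hlo, hhi⟩ := tRho_arg_mem_Ioo hρ
  set c := exp (4 * ρ) * (π - 2) / (3 * π) - 1 / 3
  have hθ₀ : 0 < arccos c := arccos_pos.mpr hhi
  have hθ : arccos c < π := (arccos_le_pi c).lt_of_ne fun h => (arccos_eq_pi.mp h).not_gt hlo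
  rw [tRho, fLow_eq hθ₀.le hθ.le]
  have key := sin_sub_mul_cos_pos hθ₀ hθ
  rw [cos_arccos hlo.le hhi.le] at key
  exact mul_pos (by positivity) key

lemma le_integral_mul_of_sign_change {f w : ℝ → ℝ} {a b c m M : ℝ} (hab : a ≤ b)
    (hbc : b ≤ c) (hf : Continuous f) (hw : Continuous w)
    (hf_nonneg : ∀ s ∈ Icc a b, 0 ≤ f s) (hf_nonpos : ∀ s ∈ Icc b c, f s ≤ 0) (hm : ∀ s ∈ Icc a b, m ≤ w s)
    (hM : ∀ s ∈ Icc b c, w s ≤ M) :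
    m * (∫ s in a..b, f s) + M * ∫ s in b..c, f s ≤ ∫ s in a..c, f s * w s := by
  have hfw : Continuous fun s => f s * w s := hf.mul hw
  rw [← intervalIntegral.integral_add_adjacent_intervals (b := b) (hfw.intervalIntegrable _ _)
    (hfw.intervalIntegrable _ _), ← intervalIntegral.integral_const_mul,
    ← intervalIntegral.integral_const_mul]
  gcongr ?_ + ?_
  · refine intervalIntegral.integral_mono_on hab ((hf.const_mul m).intervalIntegrable _ _)
      (hfw.intervalIntegrable _ _) fun s hs => ?_
    nlinarith [hf_nonneg s hs, hm s hs]
  · refine intervalIntegral.integral_mono_on hbc ((hf.const_mul M).intervalIntegrable _ _)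
      (hfw.intervalIntegrable _ _) fun s hs => ?_
    nlinarith [hf_nonpos s hs, hM s hs]

lemma fLow_le_integral_mul {ρ t : ℝ} {w : ℝ → ℝ} (ht : t ∈ Icc 0 1) (hw : Continuous w)
    (hw_ge : ∀ s, exp (-(2 * ρ)) ≤ w s) (hw_le : ∀ s, w s ≤ exp (2 * ρ)) :
    fLow ρ t ≤ ∫ s in (0 : ℝ)..1, dirichletGreen t s * sin (3 * π / 2 * s) * w s := by
  have hG : ∀ s ∈ Icc (0 : ℝ) 1, 0 ≤ dirichletGreen t s := fun s hs =>
    dirichletGreen_nonneg ht.1 ht.2 hs.1 hs.2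
  refine le_integral_mul_of_sign_change (by norm_num) (by norm_num)
    ((continuous_dirichletGreen t).mul (by fun_prop)) hw (fun s hs => ?_) (fun s hs => ?_)
    (fun s _ => hw_ge s) (fun s _ => hw_le s)
  · refine mul_nonneg (hG s ⟨hs.1, by linarith [hs.2]⟩) (sin_nonneg_of_nonneg_of_le_pi ?_ ?_)
    · nlinarith [pi_pos, hs.1]
    · nlinarith [pi_pos, hs.2]
  · refine mul_nonpos_of_nonneg_of_nonpos (hG s ⟨by linarith [hs.1], hs.2⟩) ?_
    have h := sin_nonneg_of_nonneg_of_le_pi (x := 3 * π / 2 * s - π)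
      (by nlinarith [pi_pos, hs.1]) (by nlinarith [pi_pos, hs.2])
    rw [sin_sub_pi] at h
    linarith

lemma integral_exp_mem_Icc {f : ℝ → ℝ} {ρ : ℝ} (hf : Continuous f)
    (hbound : ∀ x, |f x| ≤ ρ) :
    ∫ x in (0 : ℝ)..1, exp (f x) ∈ Icc (exp (-ρ)) (exp ρ) := by
  have hint : IntervalIntegrable (fun x => exp (f x)) volume 0 1 :=
    (continuous_exp.comp hf).intervalIntegrable _ _
  constructor
  · simpa using intervalIntegral.integral_mono_on zero_le_one intervalIntegrable_const hint
      fun x _ => exp_le_exp.mpr (neg_le_of_abs_le (hbound x))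
  · simpa using intervalIntegral.integral_mono_on zero_le_one hint intervalIntegrable_const
      fun x _ => exp_le_exp.mpr (le_of_abs_le (hbound x))

lemma exp_div_integral_exp_mem_Icc {f : ℝ → ℝ} {ρ : ℝ} (hf : Continuous f)
    (hbound : ∀ x, |f x| ≤ ρ) (y : ℝ) :
    exp (f y) / ∫ x in (0 : ℝ)..1, exp (f x) ∈ Icc (exp (-(2 * ρ))) (exp (2 * ρ)) := by
  obtain ⟨hlo, hhi⟩ := integral_exp_mem_Icc hf hbound
  constructor
  · calc exp (-(2 * ρ)) = exp (-ρ) / exp ρ := by rw [← exp_sub]; ring_nf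
      _ ≤ _ := div_le_div₀ (exp_pos _).le (exp_le_exp.mpr (neg_le_of_abs_le (hbound y)))
        ((exp_pos _).trans_le hlo) hhi
  · calc _ ≤ exp ρ / exp (-ρ) := div_le_div₀ (exp_pos _).le
          (exp_le_exp.mpr (le_of_abs_le (hbound y))) (exp_pos _) hlo
      _ = exp (2 * ρ) := by rw [← exp_sub]; ring_nf

theorem dirichlet_bvp_eigenvalue_localization_general
    (ρ : ℝ) (hρ' : ρ < 1/4 * Real.log (4 * π / (π - 2)))
    (k : ℝ → ℝ → ℝ)
    (hk : ∀ t s : ℝ, k t s = if t ≤ s then t * (1 - s) else s * (1 - t))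
    (Flow : ℝ → ℝ)
    (hFlow : ∀ t : ℝ, Flow t =
      Real.exp (-(2*ρ)) * (∫ s in (0:ℝ)..(2/3), k t s * Real.sin (3 * π / 2 * s)) +
      Real.exp (2*ρ) * ∫ s in (2/3:ℝ)..1, k t s * Real.sin (3 * π / 2 * s))
    (lam : ℝ) (u : C(Set.Icc (0:ℝ) 1, ℝ)) (hu : ‖u‖ = ρ)
    (heq : ∀ t : Set.Icc (0:ℝ) 1, u t = lam *
      ∫ s in (0:ℝ)..1, k (t:ℝ) s *
            (Real.sin (3 * π / 2 * s) * Real.exp (u (Set.projIcc 0 1 zero_le_one s)) /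
              ∫ x in (0:ℝ)..1, Real.exp (u (Set.projIcc 0 1 zero_le_one x)))) :
    -ρ / Flow (2 / (3 * π) * Real.arccos (Real.exp (4*ρ) * (π - 2) / (3 * π) - 1/3)) ≤ lam ∧ lam ≤ ρ / Flow (2 / (3 * π) * Real.arccos (Real.exp (4*ρ) * (π - 2) / (3 * π) - 1/3)) := by
  obtain rfl : k = dirichletGreen := funext₂ hk
  obtain rfl : Flow = fLow ρ := funext hFlow
  change -ρ / fLow ρ (tRho ρ) ≤ lam ∧ lam ≤ ρ / fLow ρ (tRho ρ)
  have hu_le (y : Icc (0 : ℝ) 1) : |u y| ≤ ρ := hu ▸ u.norm_coe_le_norm y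
  set f : ℝ → ℝ := fun x => u (projIcc 0 1 zero_le_one x)
  have hf : Continuous f := u.continuous.comp continuous_projIcc
  set t : Icc (0 : ℝ) 1 := ⟨tRho ρ, tRho_mem_Icc ρ⟩
  set I := ∫ s in (0 : ℝ)..1, dirichletGreen t s * sin (3 * π / 2 * s) *
    (exp (f s) / ∫ x in (0 : ℝ)..1, exp (f x))
  have hw := exp_div_integral_exp_mem_Icc hf fun x => hu_le _
  have hF : fLow ρ t ≤ I :=
    fLow_le_integral_mul t.2 (by fun_prop) (fun s => (hw s).1) (fun s => (hw s).2)
  have hFpos : 0 < fLow ρ t := fLow_tRho_pos hρ'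
  have hut : u t = lam * I := by
    rw [heq t]
    simp only [I, f, mul_assoc, mul_div_assoc]
  have hlam : |lam| * fLow ρ t ≤ ρ := calc
    |lam| * fLow ρ t ≤ |lam| * I := mul_le_mul_of_nonneg_left hF (abs_nonneg lam)
    _ = |u t| := by rw [hut, abs_mul, abs_of_pos (hFpos.trans_le hF)]
    _ ≤ ρ := hu_le t
  rw [neg_div, ← abs_le, le_div_iff₀ hFpos]
  exact hlam

/-- Localization of the eigenvalues for the Dirichlet BVP: if
0 < rho < (1/4) ln(4 pi/(pi - 2)) and (lam, u) solves the integral equation with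
sup-norm of u equal to rho, then
-rho / F_low(t_rho) <= lam <= rho / F_low(t_rho). -/
theorem dirichlet_bvp_eigenvalue_localization
    (ρ : ℝ) (hρ : 0 < ρ) (hρ' : ρ < 1/4 * Real.log (4 * π / (π - 2)))
    (k : ℝ → ℝ → ℝ)
    (hk : ∀ t s : ℝ, k t s = if t ≤ s then t * (1 - s) else s * (1 - t))
    (Flow : ℝ → ℝ)
    (hFlow : ∀ t : ℝ, Flow t =
      Real.exp (-(2*ρ)) * (∫ s in (0:ℝ)..(2/3), k t s * Real.sin (3 * π / 2 * s)) +
      Real.exp (2*ρ) * ∫ s in (2/3:ℝ)..1, k t s * Real.sin (3 * π / 2 * s))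
    (lam : ℝ) (u : C(Set.Icc (0:ℝ) 1, ℝ)) (hu : ‖u‖ = ρ)
    (heq : ∀ t : Set.Icc (0:ℝ) 1, u t = lam *
      ∫ s in (0:ℝ)..1, k (t:ℝ) s *
            (Real.sin (3 * π / 2 * s) * Real.exp (u (Set.projIcc 0 1 zero_le_one s)) /
              ∫ x in (0:ℝ)..1, Real.exp (u (Set.projIcc 0 1 zero_le_one x)))) :
    -ρ / Flow (2 / (3 * π) * Real.arccos (Real.exp (4*ρ) * (π - 2) / (3 * π) - 1/3)) ≤ lam ∧ lam ≤ ρ / Flow (2 / (3 * π) * Real.arccos (Real.exp (4*ρ) * (π - 2) / (3 * π) - 1/3)) :=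
  dirichlet_bvp_eigenvalue_localization_general ρ hρ' k hk Flow hFlow lam u hu heq
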